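/- Let B = B(x_B, r_B) ⊂ ℝ^n and let g be locally integrable on ℝ^n. Then for every x ∈ B, ∫_{(4B)^c} |x−y|^{−(n+2)} |g(y) − g_{4B}| dy ≤ C(n) · r_B^{−2} · ∑_{m=1}^{∞} 4^{−2m} |4^{m+1}B|⁻¹ ∫_{4^{m+1}B} |g(z) − g_{4^{m+1}B}| dz, provided the right-hand side is finite. -/

import Mathlib

/-!
Cover the complement of `4B` by the annuli `4^(m+2)B \ 4^(m+1)B`. For `x ∈ B` and `y` in the
`m`-th annulus, `|x - y| ≥ 4^m r`, so the kernel times the volume of `4^(m+2)B` is of order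
`16^(-m) r^(-2)`. On `4^(m+2)B`, `|g - g_{4B}|` is at most the oscillation of `g` around
`g_{4^(m+2)B}` plus `|g_{4^(m+2)B} - g_{4B}|`, and the latter telescopes along consecutive balls,
each step costing `4^n` times a mean oscillation. Exchanging the resulting double sum against the
geometric weights costs only a factor `∑ 16^(-j) ≤ 2`.
-/

open MeasureTheory Set Metric Module
open scoped ENNReal

section MeanOscillation

variable {α : Type*} [MeasurableSpace α] {μ : Measure α} {s t : Set α} {g : α → ℝ}

noncomputable def meanOscillation (μ : Measure α) (s : Set α) (g : α → ℝ) : ℝ :=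
  ⨍ z in s, |g z - ⨍ w in s, g w ∂μ| ∂μ

lemma meanOscillation_nonneg : 0 ≤ meanOscillation μ s g := by
  rw [meanOscillation, setAverage_eq]
  exact smul_nonneg (inv_nonneg.2 measureReal_nonneg) (integral_nonneg fun _ ↦ abs_nonneg _)

lemma measureReal_mul_meanOscillation (hs : μ s ≠ ∞) :
    μ.real s * meanOscillation μ s g = ∫ z in s, |g z - ⨍ w in s, g w ∂μ| ∂μ :=
  measure_smul_setAverage _ hs

lemma measureReal_mul_abs_setAverage_sub_le (hst : s ⊆ t) (ht : μ t ≠ ∞)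
    (hg : IntegrableOn g t μ) :
    μ.real s * |⨍ w in s, g w ∂μ - ⨍ w in t, g w ∂μ| ≤ μ.real t * meanOscillation μ t g := by
  set c := ⨍ w in t, g w ∂μ
  have hs : μ s ≠ ∞ := ne_top_of_le_ne_top ht (measure_mono hst)
  have hgc : IntegrableOn (fun z ↦ g z - c) t μ := hg.sub (integrableOn_const ht)
  calc μ.real s * |⨍ w in s, g w ∂μ - c|
      = |∫ z in s, (g z - c) ∂μ| := by
        rw [integral_sub (hg.mono_set hst) (integrableOn_const hs), setIntegral_const,
          ← measure_smul_setAverage _ hs, smul_eq_mul, smul_eq_mul, ← mul_sub, abs_mul,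
          abs_of_nonneg measureReal_nonneg]
    _ ≤ ∫ z in s, |g z - c| ∂μ := abs_integral_le_integral_abs
    _ ≤ ∫ z in t, |g z - c| ∂μ :=
        setIntegral_mono_set hgc.abs (.of_forall fun _ ↦ abs_nonneg _) hst.eventuallyLE
    _ = μ.real t * meanOscillation μ t g := (measureReal_mul_meanOscillation ht).symm

lemma setLIntegral_abs_sub_le (hs : μ s ≠ ∞) (hg : IntegrableOn g s μ) (c : ℝ) :
    ∫⁻ z in s, ENNReal.ofReal |g z - c| ∂μ ≤
      μ s * (ENNReal.ofReal (meanOscillation μ s g) +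
        ENNReal.ofReal |⨍ w in s, g w ∂μ - c|) := by
  set a := ⨍ w in s, g w ∂μ
  have hosc : ∫⁻ z in s, ENNReal.ofReal |g z - a| ∂μ =
      μ s * ENNReal.ofReal (meanOscillation μ s g) := by
    have hint : IntegrableOn (fun z ↦ |g z - a|) s μ := (hg.sub (integrableOn_const hs)).abs
    rw [← ofReal_integral_eq_lintegral_ofReal hint (.of_forall fun _ ↦ abs_nonneg _),
      ← measureReal_mul_meanOscillation hs, ENNReal.ofReal_mul measureReal_nonneg,
      measureReal_def, ENNReal.ofReal_toReal hs]
  calc ∫⁻ z in s, ENNReal.ofReal |g z - c| ∂μ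
      ≤ ∫⁻ z in s, (ENNReal.ofReal |g z - a| + ENNReal.ofReal |a - c|) ∂μ := by
        refine lintegral_mono fun z ↦ ?_
        rw [← ENNReal.ofReal_add (abs_nonneg _) (abs_nonneg _)]
        exact ENNReal.ofReal_le_ofReal (abs_sub_le _ _ _)
    _ = μ s * (ENNReal.ofReal (meanOscillation μ s g) + ENNReal.ofReal |a - c|) := by
        rw [lintegral_add_right _ measurable_const, setLIntegral_const, hosc, mul_add,
          mul_comm (ENNReal.ofReal _)]

end MeanOscillation

open Finset in
lemma ENNReal.tsum_mul_tsum_eq_tsum_sum_range (f g : ℕ → ℝ≥0∞) :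
    (∑' n, f n) * ∑' n, g n = ∑' n, ∑ k ∈ range (n + 1), f k * g (n - k) := by
  calc (∑' n, f n) * ∑' n, g n = ∑' p : ℕ × ℕ, f p.1 * g p.2 := by
        rw [ENNReal.tsum_prod (f := fun k l ↦ f k * g l), ← ENNReal.tsum_mul_right]
        simp_rw [← ENNReal.tsum_mul_left]
    _ = ∑' n : ℕ, ∑' p : antidiagonal n, f (p : ℕ × ℕ).1 * g (p : ℕ × ℕ).2 := by
        rw [← HasAntidiagonal.sigmaAntidiagonalEquivProd.tsum_eq, ENNReal.tsum_sigma']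
        rfl
    _ = ∑' n, ∑ k ∈ range (n + 1), f k * g (n - k) := by
        simp_rw [tsum_subtype (antidiagonal _) (fun p ↦ f p.1 * g p.2),
          Nat.sum_antidiagonal_eq_sum_range_succ fun k l ↦ f k * g l]

lemma tsum_pow_mul_sum_range_le {q : ℝ≥0∞} (hq : q ≤ 2⁻¹) (b : ℕ → ℝ≥0∞) :
    ∑' m, q ^ m * ∑ k ∈ Finset.range (m + 1), b k ≤ 2 * ∑' k, q ^ k * b k := by
  have hgeom : ∑' j, q ^ j ≤ 2 :=
    (ENNReal.tsum_le_tsum fun j ↦ pow_le_pow_left₀ bot_le hq j).trans_eq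
      ENNReal.tsum_geometric_two
  calc ∑' m, q ^ m * ∑ k ∈ Finset.range (m + 1), b k
      = (∑' k, q ^ k * b k) * ∑' j, q ^ j := by
        rw [ENNReal.tsum_mul_tsum_eq_tsum_sum_range]
        refine tsum_congr fun m ↦ ?_
        rw [Finset.mul_sum]
        refine Finset.sum_congr rfl fun k hk ↦ ?_
        rw [mul_right_comm, ← pow_add,
          Nat.add_sub_cancel' (Nat.lt_succ_iff.1 (Finset.mem_range.1 hk))]
    _ ≤ 2 * ∑' k, q ^ k * b k := by
        rw [mul_comm]
        gcongr

lemma compl_ball_subset_iUnion_ball_diff_ball {X : Type*} [PseudoMetricSpace X] (x : X) {c R : ℝ}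
    (hc : 1 < c) (hR : 0 < R) (i : ℕ) :
    (ball x (c ^ i * R))ᶜ ⊆ ⋃ m : ℕ, ball x (c ^ (m + 1 + i) * R) \ ball x (c ^ (m + i) * R) := by
  intro y hy
  have hciR : 0 < c ^ i * R := by positivity
  have hy : 1 ≤ dist y x / (c ^ i * R) := by
    rwa [mem_compl_iff, mem_ball, not_lt, ← one_le_div hciR] at hy
  obtain ⟨m, hm, hm'⟩ := exists_nat_pow_near hy hc
  rw [le_div_iff₀ hciR, ← mul_assoc, ← pow_add] at hm
  rw [div_lt_iff₀ hciR, ← mul_assoc, ← pow_add] at hm'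
  exact mem_iUnion.2 ⟨m, hm', fun h ↦ (mem_ball.1 h).not_ge hm⟩

lemma setLIntegral_rpow_neg_mul_le {X : Type*} [SeminormedAddCommGroup X] [MeasurableSpace X]
    {μ : Measure X} {t : Set X} (ht : MeasurableSet t) {x : X} {ρ s : ℝ} (hρ : 0 < ρ) (hs : 0 ≤ s)
    (hdist : ∀ y ∈ t, ρ ≤ ‖x - y‖) (f : X → ℝ) :
    ∫⁻ y in t, ENNReal.ofReal (‖x - y‖ ^ (-s) * f y) ∂μ ≤
      ENNReal.ofReal (ρ ^ (-s)) * ∫⁻ y in t, ENNReal.ofReal (f y) ∂μ := by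
  rw [← lintegral_const_mul' _ _ ENNReal.ofReal_ne_top]
  refine setLIntegral_mono' ht fun y hy ↦ ?_
  rw [ENNReal.ofReal_mul (by positivity)]
  exact mul_le_mul_left
    (ENNReal.ofReal_le_ofReal (Real.rpow_le_rpow_of_nonpos hρ (hdist y hy) (neg_nonpos.2 hs))) _

section AddHaar

variable {E : Type*} [NormedAddCommGroup E] [NormedSpace ℝ E] [MeasurableSpace E] [BorelSpace E]
  [FiniteDimensional ℝ E] {μ : Measure E} [μ.IsAddHaarMeasure] {g : E → ℝ}

lemma addHaar_real_ball_mul (x : E) {c : ℝ} (hc : 0 < c) (R : ℝ) :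
    μ.real (ball x (c * R)) = c ^ finrank ℝ E * μ.real (ball x R) := by
  rw [measureReal_def, Measure.addHaar_ball_mul_of_pos μ x hc, ← Measure.addHaar_ball_center μ x,
    ENNReal.toReal_mul, ENNReal.toReal_ofReal (by positivity), measureReal_def]

lemma abs_setAverage_ball_sub_le (hg : LocallyIntegrable g μ) (x : E) {c R : ℝ} (hc : 1 ≤ c)
    (hR : 0 < R) :
    |⨍ w in ball x R, g w ∂μ - ⨍ w in ball x (c * R), g w ∂μ| ≤
      c ^ finrank ℝ E * meanOscillation μ (ball x (c * R)) g := by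
  have hsub : ball x R ⊆ ball x (c * R) := ball_subset_ball (le_mul_of_one_le_left hR.le hc)
  have hint : IntegrableOn g (ball x (c * R)) μ :=
    (hg.integrableOn_isCompact (isCompact_closedBall x _)).mono_set ball_subset_closedBall
  have key := measureReal_mul_abs_setAverage_sub_le hsub measure_ball_lt_top.ne hint
  rw [addHaar_real_ball_mul x (by linarith) R] at key
  exact le_of_mul_le_mul_left (key.trans_eq (by ring))
    (ENNReal.toReal_pos (measure_ball_pos μ x hR).ne' measure_ball_lt_top.ne)

lemma abs_setAverage_ball_sub_le_sum (hg : LocallyIntegrable g μ) (x : E) {c R : ℝ} (hc : 1 ≤ c)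
    (hR : 0 < R) (i N : ℕ) :
    |⨍ w in ball x (c ^ i * R), g w ∂μ - ⨍ w in ball x (c ^ (N + i) * R), g w ∂μ| ≤
      c ^ finrank ℝ E *
        ∑ k ∈ Finset.range N, meanOscillation μ (ball x (c ^ (k + i + 1) * R)) g := by
  have h := dist_le_range_sum_dist (fun k ↦ ⨍ w in ball x (c ^ (k + i) * R), g w ∂μ) N
  simp only [Real.dist_eq, zero_add] at h
  refine h.trans ?_
  rw [Finset.mul_sum]
  refine Finset.sum_le_sum fun k _ ↦ ?_
  rw [add_right_comm, pow_succ', mul_assoc]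
  exact abs_setAverage_ball_sub_le hg x hc (by positivity)

lemma ofReal_rpow_neg_mul_addHaar_ball (x₀ : E) {r : ℝ} (hr : 0 < r) (m : ℕ) :
    ENNReal.ofReal ((4 ^ m * r) ^ (-((finrank ℝ E : ℝ) + 2))) * μ (ball x₀ (4 ^ (m + 2) * r)) =
      ENNReal.ofReal (16 ^ finrank ℝ E * μ.real (ball 0 1) * r ^ (-2 : ℝ)) * 16⁻¹ ^ m := by
  have h16 : (16⁻¹ : ℝ≥0∞) ^ m = ENNReal.ofReal (16⁻¹ ^ m) := by
    rw [ENNReal.ofReal_pow (by norm_num), ENNReal.ofReal_inv_of_pos (by norm_num),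
      ENNReal.ofReal_ofNat]
  have hV : μ (ball (0 : E) 1) ≠ ∞ := measure_ball_lt_top.ne
  rw [Measure.addHaar_ball_of_pos μ x₀ (by positivity), ← ENNReal.ofReal_toReal hV, h16,
    ← mul_assoc, ← ENNReal.ofReal_mul (by positivity), ← ENNReal.ofReal_mul (by positivity),
    ← ENNReal.ofReal_mul (by positivity), ← measureReal_def]
  congr 1
  have hd : -((finrank ℝ E : ℝ) + 2) = -((finrank ℝ E + 2 : ℕ) : ℝ) := by push_cast; rfl
  have h2 : (2 : ℝ) = ((2 : ℕ) : ℝ) := by norm_num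
  rw [hd, h2, Real.rpow_neg (by positivity), Real.rpow_neg hr.le, Real.rpow_natCast,
    Real.rpow_natCast, show (16⁻¹ : ℝ) ^ m = ((4 ^ m) ^ 2)⁻¹ by
      rw [← pow_mul, mul_comm, pow_mul, inv_pow]; norm_num]
  field_simp
  ring

lemma setLIntegral_annulus_le (hg : LocallyIntegrable g μ) {x₀ x : E} {r : ℝ} (hr : 0 < r)
    (hx : x ∈ ball x₀ r) (m : ℕ) :
    ∫⁻ y in ball x₀ (4 ^ (m + 2) * r) \ ball x₀ (4 ^ (m + 1) * r),
        ENNReal.ofReal (‖x - y‖ ^ (-((finrank ℝ E : ℝ) + 2)) *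
          |g y - ⨍ w in ball x₀ (4 * r), g w ∂μ|) ∂μ ≤
      ENNReal.ofReal (16 ^ finrank ℝ E * μ.real (ball 0 1) * r ^ (-2 : ℝ)) * 16⁻¹ ^ m *
        (ENNReal.ofReal (meanOscillation μ (ball x₀ (4 ^ (m + 2) * r)) g) +
          4 ^ finrank ℝ E * ∑ k ∈ Finset.range (m + 1),
            ENNReal.ofReal (meanOscillation μ (ball x₀ (4 ^ (k + 2) * r)) g)) := by
  set B := ball x₀ (4 ^ (m + 2) * r)
  set c := ⨍ w in ball x₀ (4 * r), g w ∂μ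
  have hdist : ∀ y ∈ B \ ball x₀ (4 ^ (m + 1) * r), 4 ^ m * r ≤ ‖x - y‖ := by
    intro y hy
    have hfar : 4 ^ (m + 1) * r ≤ dist y x₀ := not_lt.1 hy.2
    have h4 : (1 : ℝ) ≤ 4 ^ m := one_le_pow₀ (by norm_num)
    rw [← dist_eq_norm, dist_comm]
    nlinarith [mem_ball.1 hx, dist_triangle y x x₀, pow_succ (4 : ℝ) m]
  have htele : ENNReal.ofReal |⨍ w in B, g w ∂μ - c| ≤ 4 ^ finrank ℝ E * ∑ k ∈ Finset.range (m + 1),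
      ENNReal.ofReal (meanOscillation μ (ball x₀ (4 ^ (k + 2) * r)) g) := by
    have h := abs_setAverage_ball_sub_le_sum hg x₀ (by norm_num : (1 : ℝ) ≤ 4) hr 1 (m + 1)
    rw [pow_one, abs_sub_comm] at h
    refine (ENNReal.ofReal_le_ofReal h).trans_eq ?_
    rw [ENNReal.ofReal_mul (by positivity),
      ENNReal.ofReal_sum_of_nonneg fun _ _ ↦ meanOscillation_nonneg,
      ENNReal.ofReal_pow (by norm_num), ENNReal.ofReal_ofNat]
  have hint : IntegrableOn g B μ :=
    (hg.integrableOn_isCompact (isCompact_closedBall x₀ _)).mono_set ball_subset_closedBall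
  calc _ ≤ ENNReal.ofReal ((4 ^ m * r) ^ (-((finrank ℝ E : ℝ) + 2))) *
          ∫⁻ y in B \ ball x₀ (4 ^ (m + 1) * r), ENNReal.ofReal |g y - c| ∂μ :=
        setLIntegral_rpow_neg_mul_le (measurableSet_ball.diff measurableSet_ball) (by positivity)
          (by positivity) hdist _
    _ ≤ ENNReal.ofReal ((4 ^ m * r) ^ (-((finrank ℝ E : ℝ) + 2))) *
          ∫⁻ y in B, ENNReal.ofReal |g y - c| ∂μ := by
        gcongr
        exact sdiff_subset
    _ ≤ ENNReal.ofReal ((4 ^ m * r) ^ (-((finrank ℝ E : ℝ) + 2))) * (μ B *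
          (ENNReal.ofReal (meanOscillation μ B g) + ENNReal.ofReal |⨍ w in B, g w ∂μ - c|)) := by
        gcongr
        exact setLIntegral_abs_sub_le measure_ball_lt_top.ne hint c
    _ ≤ _ := by
        rw [← mul_assoc, ofReal_rpow_neg_mul_addHaar_ball x₀ hr m]
        gcongr

lemma lintegral_compl_ball_le (hg : LocallyIntegrable g μ) {x₀ x : E} {r : ℝ} (hr : 0 < r)
    (hx : x ∈ ball x₀ r) :
    ∫⁻ y in (ball x₀ (4 * r))ᶜ, ENNReal.ofReal (‖x - y‖ ^ (-((finrank ℝ E : ℝ) + 2)) *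
        |g y - ⨍ w in ball x₀ (4 * r), g w ∂μ|) ∂μ ≤
      ENNReal.ofReal
          (16 ^ finrank ℝ E * (1 + 2 * 4 ^ finrank ℝ E) * μ.real (ball 0 1) * r ^ (-2 : ℝ)) *
        ∑' m, 16⁻¹ ^ m * ENNReal.ofReal (meanOscillation μ (ball x₀ (4 ^ (m + 2) * r)) g) := by
  set d := finrank ℝ E
  set b : ℕ → ℝ≥0∞ := fun k ↦ ENNReal.ofReal (meanOscillation μ (ball x₀ (4 ^ (k + 2) * r)) g)
  set K := ENNReal.ofReal (16 ^ d * μ.real (ball 0 1) * r ^ (-2 : ℝ))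
  have hK : ENNReal.ofReal (16 ^ d * (1 + 2 * 4 ^ d) * μ.real (ball 0 1) * r ^ (-2 : ℝ)) =
      K * (1 + 2 * 4 ^ d) := by
    rw [show (16 : ℝ) ^ d * (1 + 2 * 4 ^ d) * μ.real (ball 0 1) * r ^ (-2 : ℝ) =
        16 ^ d * μ.real (ball 0 1) * r ^ (-2 : ℝ) * ((1 + 2 * 4 ^ d : ℕ) : ℝ) by push_cast; ring,
      ENNReal.ofReal_mul (by positivity), ENNReal.ofReal_natCast]
    push_cast
    rfl
  have hcover := compl_ball_subset_iUnion_ball_diff_ball x₀ (by norm_num : (1 : ℝ) < 4) hr 1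
  rw [pow_one] at hcover
  rw [hK]
  calc _ ≤ ∑' m : ℕ, ∫⁻ y in ball x₀ (4 ^ (m + 1 + 1) * r) \ ball x₀ (4 ^ (m + 1) * r),
          ENNReal.ofReal (‖x - y‖ ^ (-((d : ℝ) + 2)) *
            |g y - ⨍ w in ball x₀ (4 * r), g w ∂μ|) ∂μ :=
        (lintegral_mono_set hcover).trans (lintegral_iUnion_le _ _)
    _ ≤ ∑' m, K * 16⁻¹ ^ m * (b m + 4 ^ d * ∑ k ∈ Finset.range (m + 1), b k) :=
        ENNReal.tsum_le_tsum fun m ↦ setLIntegral_annulus_le hg hr hx m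
    _ = K * (∑' m, 16⁻¹ ^ m * b m +
          4 ^ d * ∑' m, 16⁻¹ ^ m * ∑ k ∈ Finset.range (m + 1), b k) := by
        rw [← ENNReal.tsum_mul_left, ← ENNReal.tsum_add, ← ENNReal.tsum_mul_left]
        exact tsum_congr fun m ↦ by ring
    _ ≤ K * (∑' m, 16⁻¹ ^ m * b m + 4 ^ d * (2 * ∑' m, 16⁻¹ ^ m * b m)) := by
        gcongr
        exact tsum_pow_mul_sum_range_le (ENNReal.inv_le_inv.2 (by norm_num)) b
    _ = K * (1 + 2 * 4 ^ d) * ∑' m, 16⁻¹ ^ m * b m := by ring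

end AddHaar

lemma ofReal_sixteen_mul_tsum {a : ℕ → ℝ} (ha : ∀ m, 0 ≤ a m)
    (hs : Summable fun m : ℕ ↦ (4 : ℝ) ^ (-(2 : ℝ) * ((m : ℝ) + 1)) * a m) :
    ENNReal.ofReal (16 * ∑' m : ℕ, (4 : ℝ) ^ (-(2 : ℝ) * ((m : ℝ) + 1)) * a m) =
      ∑' m, 16⁻¹ ^ m * ENNReal.ofReal (a m) := by
  have hcoef (m : ℕ) : (16 : ℝ) * 4 ^ (-(2 : ℝ) * ((m : ℝ) + 1)) = 16⁻¹ ^ m := by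
    rw [show -(2 : ℝ) * ((m : ℝ) + 1) = -((2 * (m + 1) : ℕ) : ℝ) by push_cast; ring,
      Real.rpow_neg (by norm_num), Real.rpow_natCast, pow_mul, inv_pow]
    norm_num [pow_succ]
    ring
  rw [← tsum_mul_left, ENNReal.ofReal_tsum_of_nonneg
    (fun m ↦ mul_nonneg (by norm_num) (mul_nonneg (by positivity) (ha m))) (hs.mul_left 16)]
  refine tsum_congr fun m ↦ ?_
  rw [← mul_assoc, hcoef, ENNReal.ofReal_mul (by positivity), ENNReal.ofReal_pow (by norm_num),
    ENNReal.ofReal_inv_of_pos (by norm_num), ENNReal.ofReal_ofNat]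

theorem stmt_2 (n : ℕ) :
    ∃ C > 0, ∀ (x₀ : EuclideanSpace ℝ (Fin n)) (r : ℝ), 0 < r →
      ∀ g : EuclideanSpace ℝ (Fin n) → ℝ, LocallyIntegrable g volume →
      Summable (fun m : ℕ => (4:ℝ)^(-(2:ℝ)*((m:ℝ)+1)) *
        ⨍ z in ball x₀ ((4:ℝ)^(m+2)*r),
          |g z - ⨍ w in ball x₀ ((4:ℝ)^(m+2)*r), g w|) →
      ∀ x ∈ ball x₀ r,
      (∫⁻ y in (ball x₀ (4*r))ᶜ,
          ENNReal.ofReal (‖x - y‖^(-((n:ℝ)+2)) * |g y - ⨍ w in ball x₀ (4*r), g w|)) ≤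
        ENNReal.ofReal (C * r^(-(2:ℝ)) *
          ∑' m : ℕ, (4:ℝ)^(-(2:ℝ)*((m:ℝ)+1)) *
            ⨍ z in ball x₀ ((4:ℝ)^(m+2)*r),
              |g z - ⨍ w in ball x₀ ((4:ℝ)^(m+2)*r), g w|) := by
  set C₀ : ℝ := 16 ^ n * (1 + 2 * 4 ^ n) * volume.real (ball (0 : EuclideanSpace ℝ (Fin n)) 1)
  have hV : 0 < volume.real (ball (0 : EuclideanSpace ℝ (Fin n)) 1) :=
    ENNReal.toReal_pos (measure_ball_pos _ _ one_pos).ne' measure_ball_lt_top.ne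
  refine ⟨16 * C₀, by positivity, fun x₀ r hr g hg hsum x hx ↦ ?_⟩
  have key := lintegral_compl_ball_le (μ := volume) hg hr hx
  rw [finrank_euclideanSpace_fin,
    ← ofReal_sixteen_mul_tsum (fun _ ↦ meanOscillation_nonneg) hsum,
    ← ENNReal.ofReal_mul (by positivity)] at key
  refine key.trans_eq (congrArg ENNReal.ofReal ?_)
  unfold meanOscillation
  ring
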